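/- If the Gromov–Hausdorff distance between metric spaces X and Y is finite, then the inverse semigroups M(X) and M(Y) are isomorphic; explicitly, choosing ρ ∈ M(X,Y) with finite Hausdorff distance between X and Y, the maps d ↦ ρ ∘ d ∘ ρ* and b ↦ ρ* ∘ b ∘ ρ induce mutually inverse semigroup isomorphisms between M(X) and M(Y). -/

import Mathlib

open Metric

/-- A cross-metric between metric spaces `X` and `Y`: the cross-distance part
`k x y = d(x, y)` of a metric on `X ⊔ Y` extending the given metrics, with the
distance between the two pieces bounded below away from zero. -/
structure CrossMetric (X Y : Type*) [MetricSpace X] [MetricSpace Y] where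
  k : X → Y → ℝ
  sep : ∃ ε > 0, ∀ x y, ε ≤ k x y
  tri_left : ∀ x x' y, k x y ≤ dist x x' + k x' y
  tri_right : ∀ x y y', k x y ≤ k x y' + dist y' y
  cross_left : ∀ x x' y, dist x x' ≤ k x y + k x' y
  cross_right : ∀ x y y', dist y y' ≤ k x y + k x y'

/-- Composition of cross-metrics: `(ρ ∘ d)(x,z) = inf_y [d(x,y) + ρ(y,z)]`. -/
noncomputable def compFun {X Y Z : Type*} (ρ : Y → Z → ℝ) (d : X → Y → ℝ) : X → Z → ℝ :=
  fun x z => ⨅ y, (d x y + ρ y z)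

/-- The adjoint cross-metric: `d*(y,x) = d(x,y)`. -/
def adjFun {X Y : Type*} (d : X → Y → ℝ) : Y → X → ℝ := fun y x => d x y

/-- Quasi-isometry of two cross-distance functions. -/
def QI {X Y : Type*} (d1 d2 : X → Y → ℝ) : Prop :=
  ∃ α > 0, ∃ β ≥ (1:ℝ), ∀ x y,
    -α + (1/β) * d1 x y ≤ d2 x y ∧ d2 x y ≤ α + β * d1 x y

/-!
Let `E = ρ* ∘ ρ`, i.e. `E(x, x') = inf_y [ρ(x, y) + ρ(x', y)]`. The triangle inequality through `Y`
gives `dist ≤ E`, and since every point of `X` is within `C` of `Y`, `E(x, x) ≤ 2C`. Hence `E` is an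
identity up to an additive error: `g ≤ g ∘ E ≤ g + 2C` whenever `g` is 1-Lipschitz in its first
argument, and dually. By associativity of composition,
`(ρ ∘ d₁ ∘ ρ*) ∘ (ρ ∘ d₂ ∘ ρ*) = ρ ∘ d₁ ∘ E ∘ d₂ ∘ ρ*` and `ρ* ∘ (ρ ∘ d ∘ ρ*) ∘ ρ = E ∘ d ∘ E`,
so conjugation by `ρ` is multiplicative and inverted by conjugation by `ρ*` up to bounded error;
the statements for `Y` are those for `ρ*`.
-/

section CrossMetricSemigroup

variable {W X Y Z : Type*}

theorem adjFun_adjFun (f : X → Y → ℝ) : adjFun (adjFun f) = f := rfl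

section compFun

variable {f : X → Y → ℝ} {g g' : Y → Z → ℝ}

theorem compFun_nonneg (hf : 0 ≤ f) (hg : 0 ≤ g) : 0 ≤ compFun g f :=
  fun x z => Real.iInf_nonneg fun y => add_nonneg (hf x y) (hg y z)

-- Nonnegativity keeps the infima bounded below; otherwise `⨅` takes the junk value `0`.
theorem compFun_le (hf : 0 ≤ f) (hg : 0 ≤ g) (x : X) (y : Y) (z : Z) :
    compFun g f x z ≤ f x y + g y z :=
  ciInf_le ⟨0, by rintro _ ⟨y', rfl⟩; exact add_nonneg (hf x y') (hg y' z)⟩ y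

theorem le_compFun [Nonempty Y] {m : ℝ} {x : X} {z : Z} (h : ∀ y, m ≤ f x y + g y z) :
    m ≤ compFun g f x z :=
  le_ciInf h

theorem le_add_compFun [Nonempty Y] {m c : ℝ} {x : X} {z : Z}
    (h : ∀ y, m ≤ c + (f x y + g y z)) : m ≤ c + compFun g f x z := by
  have : m - c ≤ compFun g f x z := le_compFun fun y => by linarith [h y]
  linarith

theorem compFun_le_compFun_add [Nonempty Y] (hf : 0 ≤ f) (hg : 0 ≤ g) {c : ℝ}
    (h : ∀ y z, g y z ≤ g' y z + c) (x : X) (z : Z) :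
    compFun g f x z ≤ compFun g' f x z + c := by
  have : compFun g f x z ≤ c + compFun g' f x z :=
    le_add_compFun fun y => by linarith [compFun_le hf hg x y z, h y z]
  linarith

theorem compFun_assoc [Nonempty X] [Nonempty Y] {f : W → X → ℝ} {g : X → Y → ℝ}
    {h : Y → Z → ℝ} (hf : 0 ≤ f) (hg : 0 ≤ g) (hh : 0 ≤ h) :
    compFun h (compFun g f) = compFun (compFun h g) f := by
  ext w z
  apply le_antisymm
  · exact le_compFun fun x => le_add_compFun fun y => by
      linarith [compFun_le (compFun_nonneg hf hg) hh w y z, compFun_le hf hg w x y]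
  · refine le_compFun fun y => ?_
    rw [add_comm]
    exact le_add_compFun fun x => by
      linarith [compFun_le hf (compFun_nonneg hg hh) w x z, compFun_le hg hh x y z]

end compFun

section Lipschitz

variable [Dist X]

def TriLeft (f : X → Z → ℝ) : Prop :=
  ∀ x x' z, f x z ≤ dist x x' + f x' z

def TriRight (f : W → X → ℝ) : Prop :=
  ∀ w x x', f w x ≤ f w x' + dist x' x

theorem TriLeft.compFun [Nonempty Y] {f : X → Y → ℝ} {g : Y → Z → ℝ} (hf : TriLeft f)
    (hf₀ : 0 ≤ f) (hg₀ : 0 ≤ g) : TriLeft (compFun g f) :=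
  fun x x' z => le_add_compFun fun y => by linarith [compFun_le hf₀ hg₀ x y z, hf x x' y]

variable {E : X → X → ℝ}

theorem le_compFun_of_dist_le [Nonempty X] {g : X → Z → ℝ} (hE : ∀ x x', dist x x' ≤ E x x')
    (hg : TriLeft g) (x : X) (z : Z) : g x z ≤ compFun g E x z :=
  le_compFun fun x' => by linarith [hg x x' z, hE x x']

theorem le_compFun_of_dist_le' [Nonempty X] {f : W → X → ℝ} (hE : ∀ x x', dist x x' ≤ E x x')
    (hf : TriRight f) (w : W) (x : X) : f w x ≤ compFun E f w x :=
  le_compFun fun x' => by linarith [hf w x x', hE x' x]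

end Lipschitz

theorem compFun_le_of_diag_le {E : X → X → ℝ} {g : X → Z → ℝ} (hE₀ : 0 ≤ E) (hg₀ : 0 ≤ g)
    {c : ℝ} (hc : ∀ x, E x x ≤ c) (x : X) (z : Z) : compFun g E x z ≤ g x z + c := by
  linarith [compFun_le hE₀ hg₀ x x z, hc x]

theorem compFun_le_of_diag_le' {E : X → X → ℝ} {f : W → X → ℝ} (hE₀ : 0 ≤ E) (hf₀ : 0 ≤ f)
    {c : ℝ} (hc : ∀ x, E x x ≤ c) (w : W) (x : X) : compFun E f w x ≤ f w x + c := by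
  linarith [compFun_le hf₀ hE₀ w x x, hc x]

theorem QI.of_le_add {f g : X → Y → ℝ} {c : ℝ} (hc : 0 < c) (hfg : ∀ x y, f x y ≤ g x y + c)
    (hgf : ∀ x y, g x y ≤ f x y + c) : QI f g :=
  ⟨c, hc, 1, le_rfl, fun x y => by
    simp only [div_one, one_mul]
    constructor <;> linarith [hfg x y, hgf x y]⟩

noncomputable def conj (ρ : X → Y → ℝ) (d : X → X → ℝ) : Y → Y → ℝ :=
  compFun ρ (compFun d (adjFun ρ))

namespace CrossMetric

variable [MetricSpace X] [MetricSpace Y]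

theorem triLeft (ρ : CrossMetric X Y) : TriLeft ρ.k := ρ.tri_left

theorem triRight (ρ : CrossMetric X Y) : TriRight ρ.k := ρ.tri_right

theorem nonneg (ρ : CrossMetric X Y) : 0 ≤ ρ.k := fun x y => by
  show 0 ≤ ρ.k x y
  linarith [ρ.cross_left x x y, dist_self x]

def adj (ρ : CrossMetric X Y) : CrossMetric Y X where
  k := adjFun ρ.k
  sep := by
    obtain ⟨ε, hε, h⟩ := ρ.sep
    exact ⟨ε, hε, fun y x => h x y⟩
  tri_left y y' x := by
    simpa only [adjFun, dist_comm y y', add_comm (dist y' y)] using ρ.tri_right x y y'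
  tri_right y x x' := by
    simpa only [adjFun, dist_comm x x', add_comm (dist x' x)] using ρ.tri_left x x' y
  cross_left y y' x := ρ.cross_right x y y'
  cross_right y x x' := ρ.cross_left x x' y

theorem adjFun_nonneg (ρ : CrossMetric X Y) : 0 ≤ adjFun ρ.k := ρ.adj.nonneg

theorem dist_le_compFun_adjFun [Nonempty Y] (ρ : CrossMetric X Y) (x x' : X) :
    dist x x' ≤ compFun (adjFun ρ.k) ρ.k x x' :=
  le_compFun fun y => ρ.cross_left x x' y

theorem compFun_adjFun_self_le [Nonempty Y] (ρ : CrossMetric X Y) {C : ℝ}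
    (hC : ∀ x, ⨅ y, ρ.k x y < C) (x : X) : compFun (adjFun ρ.k) ρ.k x x ≤ 2 * C := by
  obtain ⟨y, hy⟩ := exists_lt_of_ciInf_lt (hC x)
  linarith [compFun_le ρ.nonneg ρ.adjFun_nonneg x y x, show adjFun ρ.k y x = ρ.k x y from rfl]

variable [Nonempty X] [Nonempty Y] (ρ : CrossMetric X Y) {C : ℝ}

theorem qi_conj_compFun (hC₀ : 0 < C) (hC : ∀ x, ⨅ y, ρ.k x y < C) {d₁ d₂ : X → X → ℝ}
    (hd₁ : TriLeft d₁) (hd₁₀ : 0 ≤ d₁) (hd₂₀ : 0 ≤ d₂) :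
    QI (conj ρ.k (compFun d₁ d₂)) (compFun (conj ρ.k d₁) (conj ρ.k d₂)) := by
  set E := compFun (adjFun ρ.k) ρ.k
  set G := compFun ρ.k d₁
  set B := compFun d₂ (adjFun ρ.k)
  have hρ₀ := ρ.nonneg
  have hρ₀' := ρ.adjFun_nonneg
  have hE₀ : 0 ≤ E := compFun_nonneg hρ₀ hρ₀'
  have hG₀ : 0 ≤ G := compFun_nonneg hd₁₀ hρ₀
  have hB₀ : 0 ≤ B := compFun_nonneg hρ₀' hd₂₀
  have hL : conj ρ.k (compFun d₁ d₂) = compFun G B := by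
    rw [conj, ← compFun_assoc hρ₀' hd₂₀ hd₁₀, compFun_assoc hB₀ hd₁₀ hρ₀]
  have hR : compFun (conj ρ.k d₁) (conj ρ.k d₂) = compFun (compFun G E) B := by
    rw [conj, conj, compFun_assoc hρ₀' hd₁₀ hρ₀, compFun_assoc hB₀ hρ₀ (compFun_nonneg hρ₀' hG₀),
      ← compFun_assoc hρ₀ hρ₀' hG₀]
  have hGE : ∀ x y, G x y ≤ compFun G E x y :=
    le_compFun_of_dist_le ρ.dist_le_compFun_adjFun (hd₁.compFun hd₁₀ hρ₀)
  have hEG : ∀ x y, compFun G E x y ≤ G x y + 2 * C :=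
    compFun_le_of_diag_le hE₀ hG₀ (ρ.compFun_adjFun_self_le hC)
  rw [hL, hR]
  refine QI.of_le_add (c := 2 * C) (by positivity) (fun y y' => ?_) (fun y y' => ?_)
  · linarith [compFun_le_compFun_add hB₀ hG₀ (g' := compFun G E) (c := 0)
      (fun x y => by linarith [hGE x y]) y y']
  · linarith [compFun_le_compFun_add hB₀ (compFun_nonneg hE₀ hG₀) hEG y y']

theorem qi_conj_adjFun_conj (hC₀ : 0 < C) (hC : ∀ x, ⨅ y, ρ.k x y < C) {d : X → X → ℝ}
    (hdl : TriLeft d) (hdr : TriRight d) (hd₀ : 0 ≤ d) :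
    QI (conj (adjFun ρ.k) (conj ρ.k d)) d := by
  set E := compFun (adjFun ρ.k) ρ.k
  set F := compFun E d
  have hρ₀ := ρ.nonneg
  have hρ₀' := ρ.adjFun_nonneg
  have hE₀ : 0 ≤ E := compFun_nonneg hρ₀ hρ₀'
  have hF₀ : 0 ≤ F := compFun_nonneg hd₀ hE₀
  have hρd₀ : 0 ≤ compFun ρ.k d := compFun_nonneg hd₀ hρ₀
  have hT : conj (adjFun ρ.k) (conj ρ.k d) = compFun F E := by
    rw [conj, conj, adjFun_adjFun, compFun_assoc hρ₀' hd₀ hρ₀, ← compFun_assoc hρ₀ hρ₀' hρd₀,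
      compFun_assoc hE₀ hρd₀ hρ₀', compFun_assoc hd₀ hρ₀ hρ₀']
  have hdF : ∀ x x', d x x' ≤ F x x' := le_compFun_of_dist_le' ρ.dist_le_compFun_adjFun hdr
  have hFd : ∀ x x', F x x' ≤ d x x' + 2 * C :=
    compFun_le_of_diag_le' hE₀ hd₀ (ρ.compFun_adjFun_self_le hC)
  have hFE : ∀ x x', F x x' ≤ compFun F E x x' :=
    le_compFun_of_dist_le ρ.dist_le_compFun_adjFun (hdl.compFun hd₀ hE₀)
  have hEF : ∀ x x', compFun F E x x' ≤ F x x' + 2 * C :=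
    compFun_le_of_diag_le hE₀ hF₀ (ρ.compFun_adjFun_self_le hC)
  rw [hT]
  refine QI.of_le_add (c := 4 * C) (by positivity) (fun x x' => ?_) (fun x x' => ?_)
  · linarith [hEF x x', hFd x x']
  · linarith [hdF x x', hFE x x']

end CrossMetric

end CrossMetricSemigroup

/-- if the Gromov--Hausdorff distance between `X` and `Y` is finite
(witnessed by a cross-metric `ρ ∈ M(X,Y)` with uniformly bounded distances to the
other space), then `d ↦ ρ ∘ d ∘ ρ*` and `b ↦ ρ* ∘ b ∘ ρ` are semigroup homomorphisms
(up to quasi-isometry) which are mutually inverse, so `M(X) ≅ M(Y)`. -/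
theorem statement18 {X Y : Type*} [MetricSpace X] [MetricSpace Y]
    [Nonempty X] [Nonempty Y] (ρ : CrossMetric X Y)
    (hC : ∃ C > (0:ℝ), (∀ x, (⨅ y, ρ.k x y) < C) ∧ (∀ y, (⨅ x, ρ.k x y) < C)) :
    (∀ d1 d2 : CrossMetric X X,
      QI (compFun ρ.k (compFun (compFun d1.k d2.k) (adjFun ρ.k)))
         (compFun (compFun ρ.k (compFun d1.k (adjFun ρ.k)))
                  (compFun ρ.k (compFun d2.k (adjFun ρ.k))))) ∧
    (∀ b1 b2 : CrossMetric Y Y,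
      QI (compFun (adjFun ρ.k) (compFun (compFun b1.k b2.k) ρ.k))
         (compFun (compFun (adjFun ρ.k) (compFun b1.k ρ.k))
                  (compFun (adjFun ρ.k) (compFun b2.k ρ.k)))) ∧
    (∀ d : CrossMetric X X,
      QI (compFun (adjFun ρ.k)
            (compFun (compFun ρ.k (compFun d.k (adjFun ρ.k))) ρ.k)) d.k) ∧
    (∀ b : CrossMetric Y Y,
      QI (compFun ρ.k
            (compFun (compFun (adjFun ρ.k) (compFun b.k ρ.k)) (adjFun ρ.k))) b.k) := by
  obtain ⟨C, hC₀, hCX, hCY⟩ := hC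
  exact ⟨fun d₁ d₂ => ρ.qi_conj_compFun hC₀ hCX d₁.triLeft d₁.nonneg d₂.nonneg,
    fun b₁ b₂ => ρ.adj.qi_conj_compFun hC₀ hCY b₁.triLeft b₁.nonneg b₂.nonneg,
    fun d => ρ.qi_conj_adjFun_conj hC₀ hCX d.triLeft d.triRight d.nonneg,
    fun b => ρ.adj.qi_conj_adjFun_conj hC₀ hCY b.triLeft b.triRight b.nonneg⟩
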